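/- Let θ ∈ {0,1/2} and let ε ∈ ℂ with 1+εk ≠ 0 for every integer k. Suppose G: ℤ×(ℤ+θ) → ℂ, H: (ℤ+θ)×ℤ → ℂ, D: (ℤ+θ)×(ℤ+θ) → ℂ satisfy, for all m,n ∈ ℤ and r,s,t ∈ ℤ+θ: G(m,r)(1+2εr) − H(r,m)(1+εm) = (m/2−r)(1+2ε(m+r)); D(r,s)(1+2εs) + D(s,r)(1+2εr) = 2+2ε(r+s); (m−n)G(m+n,r) = G(n,r)G(m,n+r) − G(m,r)G(n,m+r); (m/2−r)H(m+r,n) = H(r,n)G(m,n+r) + n·H(r,m+n); (m/2−r)D(m+r,s) = −(r+s)D(r,s) − G(m,s)D(r,m+s); −2m = H(s,m)D(r,m+s) + H(r,m)D(s,m+r); 2G(r+s,t) = D(s,t)H(r,s+t) + D(r,t)H(s,r+t). Then for every s ∈ ℤ+θ: G(0,s) = −s, H(s,0) = 0, G(2s,−s) = 0, H(s,−2s) = 2s, D(−s,s) = 1, and D(3s,s) = 1. -/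
import Mathlib


/-- membership in ℤ + θ -/
def InZT (θ x : ℂ) : Prop := ∃ k : ℤ, x = (k : ℂ) + θ

/-- under the normalized equations (3.6)–(3.12), the special values of equation (3.14) hold: G(0,s) = −s, H(s,0) = 0, G(2s,−s) = 0, H(s,−2s) = 2s, D(−s,s) = 1, D(3s,s) = 1. -/
theorem special_values_GHD (θ ε : ℂ) (hθ : θ = 0 ∨ θ = 1 / 2)
    (hε : ∀ k : ℤ, 1 + ε * (k : ℂ) ≠ 0)
    (G H D : ℂ → ℂ → ℂ)
    (e1 : ∀ (m : ℤ) (r : ℂ), InZT θ r →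
      G m r * (1 + 2 * ε * r) - H r m * (1 + ε * (m : ℂ))
        = ((m : ℂ) / 2 - r) * (1 + 2 * ε * ((m : ℂ) + r)))
    (e2 : ∀ r s : ℂ, InZT θ r → InZT θ s →
      D r s * (1 + 2 * ε * s) + D s r * (1 + 2 * ε * r) = 2 + 2 * ε * (r + s))
    (e3 : ∀ (m n : ℤ) (r : ℂ), InZT θ r →
      ((m : ℂ) - (n : ℂ)) * G ((m : ℂ) + (n : ℂ)) r
        = G n r * G m ((n : ℂ) + r) - G m r * G n ((m : ℂ) + r))
    (e4 : ∀ (m n : ℤ) (r : ℂ), InZT θ r →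
      ((m : ℂ) / 2 - r) * H ((m : ℂ) + r) n
        = H r n * G m ((n : ℂ) + r) + (n : ℂ) * H r ((m : ℂ) + (n : ℂ)))
    (e5 : ∀ (m : ℤ) (r s : ℂ), InZT θ r → InZT θ s →
      ((m : ℂ) / 2 - r) * D ((m : ℂ) + r) s
        = -(r + s) * D r s - G m s * D r ((m : ℂ) + s))
    (e6 : ∀ (m : ℤ) (r s : ℂ), InZT θ r → InZT θ s →
      -2 * (m : ℂ) = H s m * D r ((m : ℂ) + s) + H r m * D s ((m : ℂ) + r))
    (e7 : ∀ r s t : ℂ, InZT θ r → InZT θ s → InZT θ t →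
      2 * G (r + s) t = D s t * H r (s + t) + D r t * H s (r + t)) :
    ∀ s : ℂ, InZT θ s →
      G 0 s = -s ∧ H s 0 = 0 ∧ G (2 * s) (-s) = 0 ∧ H s (-(2 * s)) = 2 * s ∧
      D (-s) s = 1 ∧ D (3 * s) s = 1 := by
  obtain ⟨j, hj⟩ : ∃ j : ℤ, (j : ℂ) = 2 * θ := by
    rcases hθ with h | h
    · exact ⟨0, by simp [h]⟩
    · exact ⟨1, by norm_num [h]⟩
  have mneg : ∀ t, InZT θ t → InZT θ (-t) := by
    rintro t ⟨a, rfl⟩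
    exact ⟨-a - j, by push_cast; linear_combination hj⟩
  have m3 : ∀ t, InZT θ t → InZT θ (3 * t) := by
    rintro t ⟨a, rfl⟩
    exact ⟨3 * a + j, by push_cast; linear_combination -hj⟩
  have hDtt : ∀ t, InZT θ t → D t t = 1 := by
    intro t ht
    obtain ⟨a, ha⟩ := ht
    have hne : (1 : ℂ) + 2 * ε * t ≠ 0 := by
      have h := hε (2 * a + j)
      have hc : ((2 * a + j : ℤ) : ℂ) = 2 * t := by push_cast; linear_combination -2 * ha + hj
      rw [hc] at h
      intro hx; exact h (by linear_combination hx)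
    have h2 := e2 t t ⟨a, ha⟩ ⟨a, ha⟩
    have key : (D t t - 1) * (2 * (1 + 2 * ε * t)) = 0 := by linear_combination h2
    rcases mul_eq_zero.1 key with h | h
    · exact sub_eq_zero.mp h
    · exact absurd (by linear_combination h / 2 : (1 : ℂ) + 2 * ε * t = 0) hne
  have hG0 : ∀ t, InZT θ t → G 0 t = -t := by
    intro t ht
    have h5 := e5 0 t t ht ht
    have hd := hDtt t ht
    push_cast at h5
    rw [zero_add, hd] at h5
    linear_combination h5
  have hH0 : ∀ t, InZT θ t → H t 0 = 0 := by
    intro t ht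
    have h1 := e1 0 t ht
    have hg := hG0 t ht
    push_cast at h1
    rw [zero_add, hg] at h1
    linear_combination -h1
  have hG2 : ∀ t, InZT θ t → G (2 * t) (-t) = 0 := by
    intro t ht
    have h7 := e7 t t (-t) ht ht (mneg t ht)
    rw [show t + -t = (0 : ℂ) by ring, show t + t = 2 * t by ring, hH0 t ht] at h7
    linear_combination h7 / 2
  intro s hs
  obtain ⟨k, hk⟩ := hs
  have ms : InZT θ s := ⟨k, hk⟩
  have mns : InZT θ (-s) := mneg s ms
  have m3s : InZT θ (3 * s) := m3 s ms
  have hM2 : ((2 * k + j : ℤ) : ℂ) = 2 * s := by push_cast; linear_combination -2 * hk + hj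
  have hMn2 : ((-(2 * k + j) : ℤ) : ℂ) = -(2 * s) := by push_cast; linear_combination 2 * hk - hj
  have hM4 : ((4 * k + 2 * j : ℤ) : ℂ) = 4 * s := by push_cast; linear_combination -4 * hk + 2 * hj
  -- G(-(2s)) s = 0
  have hGn2 : G (-(2 * s)) s = 0 := by
    have := hG2 (-s) mns
    rwa [show (2 : ℂ) * -s = -(2 * s) by ring, neg_neg] at this
  -- H(s, -2s) = 2s
  have hH2 : H s (-(2 * s)) = 2 * s := by
    have h1 := e1 (-(2 * k + j)) s ms
    rw [hMn2, hGn2] at h1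
    have hne : (1 : ℂ) + ε * -(2 * s) ≠ 0 := by rw [← hMn2]; exact hε _
    have key : (H s (-(2 * s)) - 2 * s) * (1 + ε * -(2 * s)) = 0 := by linear_combination -h1
    rcases mul_eq_zero.1 key with h | h
    · exact sub_eq_zero.mp h
    · exact absurd h hne
  have hDss : D s s = 1 := hDtt s ms
  by_cases hs0 : s = 0
  · subst hs0
    refine ⟨by simpa using hG0 0 ms, hH0 0 ms, by simpa using hGn2, by simpa using hH2, ?_, ?_⟩
    · simpa using hDss
    · simpa using hDss
  -- D(-s) s = 1
  have hDns : D (-s) s = 1 := by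
    have h5 := e5 (-(2 * k + j)) s s ms ms
    rw [hMn2, hGn2, hDss, show -(2 * s) + s = -s by ring] at h5
    have key : (-(2 * s)) * (D (-s) s - 1) = 0 := by linear_combination h5
    rcases mul_eq_zero.1 key with h | h
    · exact absurd (by linear_combination -h / 2) hs0
    · exact sub_eq_zero.mp h
  -- D(3s) s = 1
  have hA : G (2 * s) s * D (-s) (3 * s) = -(2 * s) := by
    have h5 := e5 (2 * k + j) (-s) s mns ms
    rw [hM2, show 2 * s + -s = s by ring, show 2 * s + s = 3 * s by ring, hDns, hDss] at h5
    linear_combination h5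
  have hC : H (-s) (4 * s) * D (-s) (3 * s) = -(4 * s) := by
    have h6 := e6 (4 * k + 2 * j) (-s) (-s) mns mns
    rw [hM4, show 4 * s + -s = 3 * s by ring] at h6
    linear_combination -h6 / 2
  have hE : 2 * G (2 * s) s = D (3 * s) s * H (-s) (4 * s) := by
    have h7 := e7 (3 * s) (-s) s m3s mns ms
    rw [show (3 : ℂ) * s + -s = 2 * s by ring, show -s + s = (0 : ℂ) by ring,
      show (3 : ℂ) * s + s = 4 * s by ring, hDns, hH0 (3 * s) m3s] at h7
    linear_combination h7
  have key : (-(4 * s)) * (D (3 * s) s - 1) = 0 := by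
    linear_combination -(D (-s) (3 * s)) * hE + 2 * hA - D (3 * s) s * hC
  have hD3 : D (3 * s) s = 1 := by
    rcases mul_eq_zero.1 key with h | h
    · exact absurd (by linear_combination -h / 4) hs0
    · exact sub_eq_zero.mp h
  exact ⟨hG0 s ms, hH0 s ms, hG2 s ms, hH2, hDns, hD3⟩
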